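/- arXiv:1309.7497 — 8 statements merged into one kernel-verified Lean document; each statement's English description precedes it below -/
import Mathlib

section
/- Let d ∈ ℕ, ε > 0, let V : ℝ^d → ℝ be differentiable at x, let W : ℝ^d → ℝ be twice differentiable at x, let f : ℝ^d → ℝ, and set φ = exp(−W/ε). Then (Lφ)(x) − ε⁻¹·f(x)·φ(x) = 0 if and only if the infimum over c ∈ ℝ^d of (LW)(x) + ⟨c, ∇W(x)⟩ + f(x) + (1/4)·‖c‖² equals 0; moreover this infimum is always attained at c = −2∇W(x). -/
open RealInnerProductSpace

/-- The Laplacian of `g : ℝ^d → ℝ` at `x`: the sum of the second partial derivatives. -/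
noncomputable def laplacian {d : ℕ} (g : EuclideanSpace ℝ (Fin d) → ℝ)
    (x : EuclideanSpace ℝ (Fin d)) : ℝ :=
  ∑ i, fderiv ℝ (fun y => fderiv ℝ g y (EuclideanSpace.single i 1)) x
    (EuclideanSpace.single i 1)

/-- The generator associated with `ε` and `V`: `(L g)(x) = ε·Δg(x) − ⟨∇V(x), ∇g(x)⟩`. -/
noncomputable def generator {d : ℕ} (ε : ℝ) (V : EuclideanSpace ℝ (Fin d) → ℝ)
    (g : EuclideanSpace ℝ (Fin d) → ℝ) (x : EuclideanSpace ℝ (Fin d)) : ℝ :=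
  ε * laplacian g x - ⟪gradient V x, gradient g x⟫

/-!
Write `φ = exp (-W / ε)`. The chain rule gives `∇φ = -(φ/ε) ∇W` and
`Δφ = -(φ/ε) ΔW + (φ/ε²) ‖∇W‖²`, hence `Lφ - ε⁻¹ f φ = -(φ/ε) (LW - ‖∇W‖² + f)` with `φ/ε > 0`.
Completing the square, `LW + ⟪c, ∇W⟫ + f + ‖c‖²/4 = (LW - ‖∇W‖² + f) + ‖c/2 + ∇W‖²`, so the
infimum over `c` is `LW - ‖∇W‖² + f`, attained at `c = -2∇W`.
-/

open Real

section
variable {E : Type*} [NormedAddCommGroup E] [NormedSpace ℝ E] {ε : ℝ}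

theorem hasFDerivAt_exp_neg_div {W : E → ℝ} {W' : E →L[ℝ] ℝ} {y : E} (hW : HasFDerivAt W W' y) :
    HasFDerivAt (fun z => exp (-W z / ε)) ((-exp (-W y / ε) / ε) • W') y := by
  convert (hW.neg.mul_const ε⁻¹).exp using 1
  · ext; simp [div_eq_mul_inv]
  · simp only [Pi.neg_apply, div_eq_mul_inv, smul_neg, smul_smul, neg_mul, ← neg_smul, mul_neg]

theorem differentiableAt_of_differentiableAt_exp_neg_div (hε : ε ≠ 0) {W : E → ℝ} {y : E}
    (h : DifferentiableAt ℝ (fun z => exp (-W z / ε)) y) : DifferentiableAt ℝ W y := by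
  have hW : W = fun z => -ε * log (exp (-W z / ε)) := by
    funext z; rw [log_exp]; field_simp
  rw [hW]
  exact (h.log (exp_pos _).ne').const_mul _

/-- Valid also where `W` is not differentiable (both sides vanish), so that it can be
differentiated once more at a point under hypotheses at that point alone. -/
theorem fderiv_exp_neg_div (hε : ε ≠ 0) (W : E → ℝ) (y : E) :
    fderiv ℝ (fun z => exp (-W z / ε)) y = (-exp (-W y / ε) / ε) • fderiv ℝ W y := by
  by_cases hW : DifferentiableAt ℝ W y
  · exact (hasFDerivAt_exp_neg_div hW.hasFDerivAt).fderiv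
  · rw [fderiv_zero_of_not_differentiableAt hW, smul_zero,
      fderiv_zero_of_not_differentiableAt
        (mt (differentiableAt_of_differentiableAt_exp_neg_div hε) hW)]

theorem fderiv_fderiv_apply_exp_neg_div (hε : ε ≠ 0) {W : E → ℝ} {x : E}
    (hW : DifferentiableAt ℝ W x) (hW' : DifferentiableAt ℝ (fderiv ℝ W) x) (e : E) :
    fderiv ℝ (fun y => fderiv ℝ (fun z => exp (-W z / ε)) y e) x e =
      -(exp (-W x / ε) / ε) * fderiv ℝ (fun y => fderiv ℝ W y e) x e +
        exp (-W x / ε) / ε ^ 2 * fderiv ℝ W x e ^ 2 := by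
  have hWe : HasFDerivAt (fun y => fderiv ℝ W y e) (fderiv ℝ (fun y => fderiv ℝ W y e) x) x :=
    (hW'.clm_apply (differentiableAt_const e)).hasFDerivAt
  have hu : HasFDerivAt (fun y => -exp (-W y / ε) / ε)
      ((exp (-W x / ε) / ε ^ 2) • fderiv ℝ W x) x := by
    have hfun : (fun y => -exp (-W y / ε) / ε) = fun y => -ε⁻¹ * exp (-W y / ε) := by
      ext y; ring
    rw [hfun]
    refine ((hasFDerivAt_exp_neg_div hW.hasFDerivAt).const_mul (-ε⁻¹)).congr_fderiv ?_
    rw [smul_smul]; congr 1; ring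
  calc fderiv ℝ (fun y => fderiv ℝ (fun z => exp (-W z / ε)) y e) x e
      = fderiv ℝ (fun y => -exp (-W y / ε) / ε * fderiv ℝ W y e) x e := by
        simp only [fderiv_exp_neg_div hε, smul_apply, smul_eq_mul]
    _ = _ := by
        rw [(hu.fun_mul hWe).fderiv]
        simp only [add_apply, smul_apply, smul_eq_mul]
        ring

end

theorem sum_fderiv_single_sq_eq_norm_gradient_sq {d : ℕ} (W : EuclideanSpace ℝ (Fin d) → ℝ)
    (x : EuclideanSpace ℝ (Fin d)) :
    ∑ i, fderiv ℝ W x (EuclideanSpace.single i 1) ^ 2 = ‖gradient W x‖ ^ 2 := by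
  simp [← inner_gradient_left, EuclideanSpace.inner_single_right, EuclideanSpace.real_norm_sq_eq]

section
variable {d : ℕ} {ε : ℝ} {W : EuclideanSpace ℝ (Fin d) → ℝ} {x : EuclideanSpace ℝ (Fin d)}

theorem gradient_exp_neg_div (hε : ε ≠ 0) :
    gradient (fun y => exp (-W y / ε)) x = (-exp (-W x / ε) / ε) • gradient W x := by
  simp only [gradient, fderiv_exp_neg_div hε, map_smul]

theorem laplacian_exp_neg_div (hε : ε ≠ 0) (hW : DifferentiableAt ℝ W x)
    (hW' : DifferentiableAt ℝ (fderiv ℝ W) x) :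
    laplacian (fun y => exp (-W y / ε)) x =
      -(exp (-W x / ε) / ε) * laplacian W x + exp (-W x / ε) / ε ^ 2 * ‖gradient W x‖ ^ 2 := by
  simp only [laplacian, fderiv_fderiv_apply_exp_neg_div hε hW hW', Finset.sum_add_distrib,
    ← Finset.mul_sum, sum_fderiv_single_sq_eq_norm_gradient_sq]

theorem generator_exp_neg_div (hε : ε ≠ 0) (V : EuclideanSpace ℝ (Fin d) → ℝ)
    (hW : DifferentiableAt ℝ W x) (hW' : DifferentiableAt ℝ (fderiv ℝ W) x) :
    generator ε V (fun y => exp (-W y / ε)) x =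
      -(exp (-W x / ε) / ε) * (generator ε V W x - ‖gradient W x‖ ^ 2) := by
  rw [generator, generator, laplacian_exp_neg_div hε hW hW', gradient_exp_neg_div hε,
    inner_smul_right]
  field_simp
  ring

end

section
variable {F : Type*} [NormedAddCommGroup F] [InnerProductSpace ℝ F]

theorem add_inner_add_quarter_norm_sq (a : ℝ) (v c : F) :
    a + ⟪c, v⟫ + 1 / 4 * ‖c‖ ^ 2 = a - ‖v‖ ^ 2 + ‖(2 : ℝ)⁻¹ • c + v‖ ^ 2 := by
  rw [norm_add_sq_real, norm_smul, real_inner_smul_left]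
  norm_num
  ring

theorem isLeast_range_add_inner_add_quarter_norm_sq (a : ℝ) (v : F) :
    IsLeast (Set.range fun c : F => a + ⟪c, v⟫ + 1 / 4 * ‖c‖ ^ 2) (a - ‖v‖ ^ 2) := by
  refine ⟨⟨-(2 : ℝ) • v, ?_⟩, ?_⟩
  · simp only [add_inner_add_quarter_norm_sq, smul_smul]
    norm_num
  · rintro _ ⟨c, rfl⟩
    simp only [add_inner_add_quarter_norm_sq]
    exact le_add_of_nonneg_right (sq_nonneg _)

end

theorem log_transform_hjb_iff_general {d : ℕ} (ε : ℝ) (hε : 0 < ε)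
    (V W : EuclideanSpace ℝ (Fin d) → ℝ) (x : EuclideanSpace ℝ (Fin d))
    (hW : DifferentiableAt ℝ W x)
    (hW' : DifferentiableAt ℝ (fderiv ℝ W) x)
    (f : EuclideanSpace ℝ (Fin d) → ℝ)
    (φ : EuclideanSpace ℝ (Fin d) → ℝ)
    (hφ : φ = fun y => Real.exp (-W y / ε))
    (g : EuclideanSpace ℝ (Fin d) → ℝ)
    (hg : g = fun c => generator ε V W x + ⟪c, gradient W x⟫ + f x + (1 / 4 : ℝ) * ‖c‖ ^ 2) :
    ((generator ε V φ x - ε⁻¹ * f x * φ x = 0) ↔ (⨅ c, g c) = 0) ∧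
    IsLeast (Set.range g) (g (-(2 : ℝ) • gradient W x)) := by
  subst hφ
  set K := generator ε V W x - ‖gradient W x‖ ^ 2 + f x
  have hg' : g = fun c => (generator ε V W x + f x) + ⟪c, gradient W x⟫ + 1 / 4 * ‖c‖ ^ 2 := by
    rw [hg]; ext c; ring
  have hleast : IsLeast (Set.range g) K := by
    rw [hg']
    convert isLeast_range_add_inner_add_quarter_norm_sq _ (gradient W x) using 1
    ring
  have hmin : g (-(2 : ℝ) • gradient W x) = K := by
    simp only [hg', add_inner_add_quarter_norm_sq, smul_smul]
    norm_num
    ring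
  have hlhs : generator ε V (fun y => exp (-W y / ε)) x - ε⁻¹ * f x * exp (-W x / ε) =
      -(exp (-W x / ε) / ε) * K := by
    rw [generator_exp_neg_div hε.ne' V hW hW']
    ring
  have hcoeff : -(exp (-W x / ε) / ε) ≠ 0 :=
    neg_ne_zero.mpr (div_pos (exp_pos _) hε).ne'
  rw [hlhs, iInf, hleast.csInf_eq, mul_eq_zero, or_iff_right hcoeff, hmin]
  exact ⟨Iff.rfl, hleast⟩

/-- With `φ = exp(-W/ε)`, `(Lφ)(x) - ε⁻¹ f(x) φ(x) = 0` iff the infimum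
over `c ∈ ℝ^d` of `(LW)(x) + ⟨c, ∇W(x)⟩ + f(x) + (1/4)‖c‖²` equals `0`; moreover this
infimum is always attained at `c = -2∇W(x)`. -/
theorem log_transform_hjb_iff {d : ℕ} (ε : ℝ) (hε : 0 < ε)
    (V W : EuclideanSpace ℝ (Fin d) → ℝ) (x : EuclideanSpace ℝ (Fin d))
    (hV : DifferentiableAt ℝ V x)
    (hW : DifferentiableAt ℝ W x)
    (hW' : DifferentiableAt ℝ (fderiv ℝ W) x)
    (f : EuclideanSpace ℝ (Fin d) → ℝ)
    (φ : EuclideanSpace ℝ (Fin d) → ℝ)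
    (hφ : φ = fun y => Real.exp (-W y / ε))
    (g : EuclideanSpace ℝ (Fin d) → ℝ)
    (hg : g = fun c => generator ε V W x + ⟪c, gradient W x⟫ + f x + (1 / 4 : ℝ) * ‖c‖ ^ 2) :
    ((generator ε V φ x - ε⁻¹ * f x * φ x = 0) ↔ (⨅ c, g c) = 0) ∧
    IsLeast (Set.range g) (g (-(2 : ℝ) • gradient W x)) :=
  log_transform_hjb_iff_general ε hε V W x hW hW' f φ hφ g hg
end

section
/- Let ι be a finite nonempty type, let G : ι → ι → ℝ be a generator matrix, let ε > 0, and let φ : ι → ℝ satisfy φ i > 0 for all i. Set W i = −ε·log(φ i). Then for every i ∈ ι and every v : ι → ℝ with v j > 0 for all j, one has ∑_j G^v i j · W j + k^v i ≥ −ε·(∑_j G i j · φ j)/φ i, with equality when v = φ. Consequently, for every i, ε·(∑_j G i j · φ j)/φ i = −min over positive v of (∑_j G^v i j · W j + k^v i), the minimum being attained at v = φ. -/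
/-- The tilted generator `G^v`: `G^v i j = G i j · v j / v i` for `j ≠ i`, and
`G^v i i = -∑_{j ≠ i} G^v i j`. -/
noncomputable def tiltedGen {ι : Type*} [Fintype ι] [DecidableEq ι]
    (G : ι → ι → ℝ) (v : ι → ℝ) (i j : ι) : ℝ :=
  if j = i then -∑ k ∈ Finset.univ.erase i, G i k * v k / v i
  else G i j * v j / v i

/-- The running cost `k^v i = ε ∑_{j ≠ i} G i j ((v j / v i)(log(v j / v i) - 1) + 1)`. -/
noncomputable def runningCost {ι : Type*} [Fintype ι] [DecidableEq ι]
    (ε : ℝ) (G : ι → ι → ℝ) (v : ι → ℝ) (i : ι) : ℝ :=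
  ε * ∑ j ∈ Finset.univ.erase i, G i j * ((v j / v i) * (Real.log (v j / v i) - 1) + 1)

lemma scalar_key (u c : ℝ) (hu : 0 < u) (hc : 0 < c) :
    0 ≤ u * Real.log u - u * Real.log c - u + c := by
  have h1 := Real.log_le_sub_one_of_pos (div_pos hc hu)
  rw [Real.log_div hc.ne' hu.ne'] at h1
  have h2 := mul_le_mul_of_nonneg_left h1 hu.le
  have h3 : u * (c / u) = c := by field_simp
  nlinarith

lemma scalar_ineq (ε a u c : ℝ) (hε : 0 < ε) (ha : 0 ≤ a) (hu : 0 < u) (hc : 0 < c) :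
    ε * a * (1 - c) ≤ a * u * (-ε * Real.log c) + ε * (a * (u * (Real.log u - 1) + 1)) := by
  have key := scalar_key u c hu hc
  nlinarith [mul_nonneg (mul_nonneg hε.le ha) key]

lemma hF_lemma {ι : Type*} [Fintype ι] [DecidableEq ι]
    (G : ι → ι → ℝ) (ε : ℝ) (W v : ι → ℝ) (i : ι) :
    ∑ j, tiltedGen G v i j * W j + runningCost ε G v i
      = ∑ j ∈ Finset.univ.erase i,
          (G i j * v j / v i * (W j - W i)
            + ε * (G i j * ((v j / v i) * (Real.log (v j / v i) - 1) + 1))) := by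
  rw [← Finset.add_sum_erase _ (fun j => tiltedGen G v i j * W j) (Finset.mem_univ i)]
  have h1 : ∑ j ∈ Finset.univ.erase i, tiltedGen G v i j * W j
      = ∑ j ∈ Finset.univ.erase i, G i j * v j / v i * W j :=
    Finset.sum_congr rfl fun j hj => by
      rw [tiltedGen, if_neg (Finset.ne_of_mem_erase hj)]
  have h2 : tiltedGen G v i i = -∑ k ∈ Finset.univ.erase i, G i k * v k / v i := if_pos rfl
  rw [h1, h2, runningCost, Finset.sum_add_distrib, Finset.mul_sum]
  rw [neg_mul, Finset.sum_mul, neg_add_eq_sub, ← Finset.sum_sub_distrib]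
  congr 1
  exact Finset.sum_congr rfl fun j hj => by ring

/-- For a generator matrix `G`, `ε > 0`, `φ > 0` and `W = -ε log φ`:
for every `i` and every positive `v`, `∑_j G^v i j W j + k^v i ≥ -ε (∑_j G i j φ j)/φ i`,
with equality when `v = φ`; consequently `ε (∑_j G i j φ j)/φ i` is minus the minimum
over positive `v`, the minimum being attained at `v = φ`. -/
theorem tilted_bellman_lower_bound {ι : Type*} [Fintype ι] [Nonempty ι] [DecidableEq ι]
    (G : ι → ι → ℝ) (hG1 : ∀ i j, i ≠ j → 0 ≤ G i j) (hG2 : ∀ i, ∑ j, G i j = 0)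
    (ε : ℝ) (hε : 0 < ε) (φ : ι → ℝ) (hφ : ∀ i, 0 < φ i)
    (W : ι → ℝ) (hW : W = fun i => -ε * Real.log (φ i)) :
    ∀ i : ι,
      (∀ v : ι → ℝ, (∀ j, 0 < v j) →
        ∑ j, tiltedGen G v i j * W j + runningCost ε G v i ≥
          -ε * (∑ j, G i j * φ j) / φ i) ∧
      (∑ j, tiltedGen G φ i j * W j + runningCost ε G φ i =
          -ε * (∑ j, G i j * φ j) / φ i) ∧
      IsLeast {r : ℝ | ∃ v : ι → ℝ, (∀ j, 0 < v j) ∧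
          r = ∑ j, tiltedGen G v i j * W j + runningCost ε G v i}
        (-(ε * (∑ j, G i j * φ j) / φ i)) := by
  intro i
  have hGii : G i i = -∑ j ∈ Finset.univ.erase i, G i j := by
    have h := hG2 i
    rw [← Finset.add_sum_erase _ (fun j => G i j) (Finset.mem_univ i)] at h
    linarith
  have hS : ∑ j, G i j * φ j
      = G i i * φ i + ∑ j ∈ Finset.univ.erase i, G i j * φ j :=
    (Finset.add_sum_erase _ (fun j => G i j * φ j) (Finset.mem_univ i)).symm
  have hφi := (hφ i).ne'
  have hR : ∑ j ∈ Finset.univ.erase i, ε * (G i j * (1 - φ j / φ i))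
      = -ε * (∑ j, G i j * φ j) / φ i := by
    have e1 : ∀ j ∈ Finset.univ.erase i,
        ε * (G i j * (1 - φ j / φ i)) = ε * G i j - ε * (G i j * φ j) / φ i :=
      fun j _ => by field_simp
    rw [Finset.sum_congr rfl e1, Finset.sum_sub_distrib, ← Finset.mul_sum,
      ← Finset.sum_div, ← Finset.mul_sum, hS, hGii]
    field_simp
    ring
  have hWd : ∀ j : ι, W j - W i = -ε * Real.log (φ j / φ i) := by
    intro j
    rw [hW]
    simp only
    rw [Real.log_div (hφ j).ne' hφi]
    ring
  have hmain : ∀ v : ι → ℝ, (∀ j, 0 < v j) →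
      -ε * (∑ j, G i j * φ j) / φ i ≤
        ∑ j, tiltedGen G v i j * W j + runningCost ε G v i := by
    intro v hv
    rw [hF_lemma G ε W v i, ← hR]
    apply Finset.sum_le_sum
    intro j hj
    have ha : 0 ≤ G i j := hG1 i j (Finset.ne_of_mem_erase hj).symm
    have hu : 0 < v j / v i := div_pos (hv j) (hv i)
    have hc : 0 < φ j / φ i := div_pos (hφ j) (hφ i)
    rw [hWd j]
    calc ε * (G i j * (1 - φ j / φ i)) = ε * G i j * (1 - φ j / φ i) := by ring
      _ ≤ G i j * (v j / v i) * (-ε * Real.log (φ j / φ i))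
          + ε * (G i j * ((v j / v i) * (Real.log (v j / v i) - 1) + 1)) :=
        scalar_ineq ε (G i j) (v j / v i) (φ j / φ i) hε ha hu hc
      _ = G i j * v j / v i * (-ε * Real.log (φ j / φ i))
          + ε * (G i j * ((v j / v i) * (Real.log (v j / v i) - 1) + 1)) := by ring
  have heq : ∑ j, tiltedGen G φ i j * W j + runningCost ε G φ i
      = -ε * (∑ j, G i j * φ j) / φ i := by
    rw [hF_lemma G ε W φ i, ← hR]
    apply Finset.sum_congr rfl
    intro j hj
    rw [hWd j]
    ring
  refine ⟨fun v hv => hmain v hv, heq, ⟨⟨φ, hφ, by rw [heq]; ring⟩, ?_⟩⟩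
  rintro r ⟨v, hv, rfl⟩
  have h := hmain v hv
  have h2 : -(ε * (∑ j, G i j * φ j) / φ i) = -ε * (∑ j, G i j * φ j) / φ i := by ring
  linarith
end

section
/- Let ι be a finite nonempty type, let G : ι → ι → ℝ be a generator matrix, let ε > 0, let f̂ : ι → ℝ, let A ⊆ ι, and let φ : ι → ℝ satisfy φ i > 0 for all i and φ i = 1 for all i ∈ A. Set W i = −ε·log(φ i). Then φ satisfies the discrete Feynman–Kac equation ∑_j G i j · φ j − ε⁻¹·f̂ i · φ i = 0 for all i ∉ A if and only if W satisfies the discrete Bellman equation: W i = 0 for all i ∈ A and, for every i ∉ A, the infimum over positive v : ι → ℝ of ∑_j G^v i j · W j + k^v i + f̂ i equals 0; moreover, in that case the infimum is attained at v = φ. -/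
/-!
With `W = -ε log φ`, the `j`-th summand of the Bellman objective at `v` depends on `v` only
through `r = v j / v i`, as `G i j (-ε r log c + ε (r log r - r + 1))` with `c = φ j / φ i`.
By Legendre duality of `r ↦ r log r - r + 1` this is smallest at `r = c`, so `v = φ` is a
minimiser; and the minimum value is `-(ε / φ i)` times the Feynman–Kac residual at `i`,
because the rows of `G` sum to zero.
-/

open Finset Real

/-- The Legendre transform of `r ↦ r log r - r + 1` at slope `log c` is attained at `r = c`. -/
lemma mul_neg_log_add_entropy_le {ε c r : ℝ} (hε : 0 ≤ ε) (hc : 0 < c) (hr : 0 < r) :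
    c * (-ε * log c) + ε * (c * (log c - 1) + 1) ≤
      r * (-ε * log c) + ε * (r * (log r - 1) + 1) := by
  have hlog : 1 - c / r ≤ log (r / c) := by
    simpa only [inv_div] using one_sub_inv_le_log_of_pos (div_pos hr hc)
  have hgap : r - c ≤ r * (log r - log c) := by
    rw [← log_div hr.ne' hc.ne']
    calc r - c = r * (1 - c / r) := by field_simp
      _ ≤ r * log (r / c) := mul_le_mul_of_nonneg_left hlog hr.le
  nlinarith [mul_le_mul_of_nonneg_left hgap hε]

lemma neg_mul_log_sub_neg_mul_log (ε : ℝ) {x y : ℝ} (hx : 0 < x) (hy : 0 < y) :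
    -ε * log y - -ε * log x = -ε * log (y / x) := by
  rw [log_div hy.ne' hx.ne']
  ring

section Bellman

variable {ι : Type*} [Fintype ι] [DecidableEq ι]

noncomputable def bellmanObjective (ε : ℝ) (G : ι → ι → ℝ) (fhat W v : ι → ℝ) (i : ι) : ℝ :=
  ∑ j, tiltedGen G v i j * W j + runningCost ε G v i + fhat i

lemma sum_tiltedGen_mul (G : ι → ι → ℝ) (v W : ι → ℝ) (i : ι) :
    ∑ j, tiltedGen G v i j * W j = ∑ j ∈ univ.erase i, G i j * v j / v i * (W j - W i) := by
  have hdiag : tiltedGen G v i i = -∑ k ∈ univ.erase i, G i k * v k / v i := if_pos rfl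
  have hoff : ∀ j ∈ univ.erase i, tiltedGen G v i j * W j = G i j * v j / v i * W j :=
    fun j hj => by rw [tiltedGen, if_neg (ne_of_mem_erase hj)]
  rw [← add_sum_erase _ _ (mem_univ i), hdiag, sum_congr rfl hoff]
  simp only [mul_sub, sum_sub_distrib, ← sum_mul]
  ring

lemma bellmanObjective_eq_sum_erase (ε : ℝ) (G : ι → ι → ℝ) (fhat W v : ι → ℝ) (i : ι) :
    bellmanObjective ε G fhat W v i =
      ∑ j ∈ univ.erase i, G i j * (v j / v i * (W j - W i) +
        ε * (v j / v i * (log (v j / v i) - 1) + 1)) + fhat i := by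
  rw [bellmanObjective, sum_tiltedGen_mul, runningCost, mul_sum, ← sum_add_distrib]
  congr 1
  exact sum_congr rfl fun j _ => by ring

variable {ε : ℝ} {G : ι → ι → ℝ} {φ : ι → ℝ}

lemma isLeast_bellmanObjective (fhat : ι → ℝ) {i : ι} (hG : ∀ j, i ≠ j → 0 ≤ G i j)
    (hε : 0 ≤ ε) (hφ : ∀ i, 0 < φ i) :
    IsLeast {r | ∃ v : ι → ℝ, (∀ j, 0 < v j) ∧
        r = bellmanObjective ε G fhat (fun k => -ε * log (φ k)) v i}
      (bellmanObjective ε G fhat (fun k => -ε * log (φ k)) φ i) := by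
  refine ⟨⟨φ, hφ, rfl⟩, ?_⟩
  rintro r ⟨v, hv, rfl⟩
  rw [bellmanObjective_eq_sum_erase, bellmanObjective_eq_sum_erase]
  refine add_le_add_left (sum_le_sum fun j hj => ?_) _
  rw [neg_mul_log_sub_neg_mul_log ε (hφ i) (hφ j)]
  exact mul_le_mul_of_nonneg_left
    (mul_neg_log_add_entropy_le hε (div_pos (hφ j) (hφ i)) (div_pos (hv j) (hv i)))
    (hG j (ne_of_mem_erase hj).symm)

lemma bellmanObjective_self (fhat : ι → ℝ) {i : ι} (hG : ∑ j, G i j = 0) (hε : ε ≠ 0)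
    (hφ : ∀ i, 0 < φ i) :
    bellmanObjective ε G fhat (fun k => -ε * log (φ k)) φ i =
      -(ε / φ i) * (∑ j, G i j * φ j - ε⁻¹ * fhat i * φ i) := by
  have hφi := (hφ i).ne'
  have hterm : ∀ j ∈ univ.erase i,
      G i j * (φ j / φ i * (-ε * log (φ j) - -ε * log (φ i)) +
        ε * (φ j / φ i * (log (φ j / φ i) - 1) + 1)) = ε * G i j - ε / φ i * (G i j * φ j) :=
    fun j _ => by
      rw [neg_mul_log_sub_neg_mul_log ε (hφ i) (hφ j)]
      field_simp
      ring
  have hdiag : ε * G i i - ε / φ i * (G i i * φ i) = 0 := by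
    field_simp
    ring
  rw [bellmanObjective_eq_sum_erase, sum_congr rfl hterm,
    sum_erase (f := fun j => ε * G i j - ε / φ i * (G i j * φ j)) _ hdiag, sum_sub_distrib,
    ← mul_sum, ← mul_sum, hG]
  field_simp
  ring

end Bellman

theorem feynman_kac_iff_bellman_general {ι : Type*} [Fintype ι] [DecidableEq ι]
    (G : ι → ι → ℝ) (hG1 : ∀ i j, i ≠ j → 0 ≤ G i j) (hG2 : ∀ i, ∑ j, G i j = 0)
    (ε : ℝ) (hε : 0 < ε) (fhat : ι → ℝ) (A : Set ι)
    (φ : ι → ℝ) (hφ : ∀ i, 0 < φ i) (hφA : ∀ i ∈ A, φ i = 1)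
    (W : ι → ℝ) (hW : W = fun i => -ε * Real.log (φ i)) :
    ((∀ i ∉ A, ∑ j, G i j * φ j - ε⁻¹ * fhat i * φ i = 0) ↔
      ((∀ i ∈ A, W i = 0) ∧ ∀ i ∉ A,
        sInf {r : ℝ | ∃ v : ι → ℝ, (∀ j, 0 < v j) ∧
          r = ∑ j, tiltedGen G v i j * W j + runningCost ε G v i + fhat i} = 0)) ∧
    ((∀ i ∉ A, ∑ j, G i j * φ j - ε⁻¹ * fhat i * φ i = 0) →
      ∀ i ∉ A,
        IsLeast {r : ℝ | ∃ v : ι → ℝ, (∀ j, 0 < v j) ∧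
            r = ∑ j, tiltedGen G v i j * W j + runningCost ε G v i + fhat i}
          (∑ j, tiltedGen G φ i j * W j + runningCost ε G φ i + fhat i)) := by
  subst hW
  have hleast (i : ι) := isLeast_bellmanObjective fhat (hG1 i) hε.le hφ
  have hmin (i : ι) : sInf {r | ∃ v : ι → ℝ, (∀ j, 0 < v j) ∧
      r = bellmanObjective ε G fhat (fun k => -ε * log (φ k)) v i} =
      -(ε / φ i) * (∑ j, G i j * φ j - ε⁻¹ * fhat i * φ i) := by
    rw [(hleast i).csInf_eq, bellmanObjective_self fhat (hG2 i) hε.ne' hφ]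
  have hfactor (i : ι) : -(ε / φ i) ≠ 0 := neg_ne_zero.mpr (div_pos hε (hφ i)).ne'
  refine ⟨⟨fun hFK => ⟨fun i hi => by simp [hφA i hi], fun i hi => ?_⟩,
    fun ⟨_, hB⟩ i hi => ?_⟩, fun _ i _ => hleast i⟩
  · exact (hmin i).trans (by rw [hFK i hi, mul_zero])
  · exact (mul_eq_zero.mp ((hmin i).symm.trans (hB i hi))).resolve_left (hfactor i)

/-- For a generator matrix `G`, `ε > 0`, `f̂ : ι → ℝ`, `A ⊆ ι`, and `φ > 0`
with `φ = 1` on `A`, setting `W = -ε log φ`: `φ` satisfies the discrete Feynman–Kac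
equation `∑_j G i j φ j - ε⁻¹ f̂ i φ i = 0` for all `i ∉ A` iff `W` satisfies the
discrete Bellman equation (`W = 0` on `A` and, for every `i ∉ A`, the infimum over
positive `v` of `∑_j G^v i j W j + k^v i + f̂ i` equals `0`); moreover, in that case
the infimum is attained at `v = φ`. -/
theorem feynman_kac_iff_bellman {ι : Type*} [Fintype ι] [Nonempty ι] [DecidableEq ι]
    (G : ι → ι → ℝ) (hG1 : ∀ i j, i ≠ j → 0 ≤ G i j) (hG2 : ∀ i, ∑ j, G i j = 0)
    (ε : ℝ) (hε : 0 < ε) (fhat : ι → ℝ) (A : Set ι)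
    (φ : ι → ℝ) (hφ : ∀ i, 0 < φ i) (hφA : ∀ i ∈ A, φ i = 1)
    (W : ι → ℝ) (hW : W = fun i => -ε * Real.log (φ i)) :
    ((∀ i ∉ A, ∑ j, G i j * φ j - ε⁻¹ * fhat i * φ i = 0) ↔
      ((∀ i ∈ A, W i = 0) ∧ ∀ i ∉ A,
        sInf {r : ℝ | ∃ v : ι → ℝ, (∀ j, 0 < v j) ∧
          r = ∑ j, tiltedGen G v i j * W j + runningCost ε G v i + fhat i} = 0)) ∧
    ((∀ i ∉ A, ∑ j, G i j * φ j - ε⁻¹ * fhat i * φ i = 0) →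
      ∀ i ∉ A,
        IsLeast {r : ℝ | ∃ v : ι → ℝ, (∀ j, 0 < v j) ∧
            r = ∑ j, tiltedGen G v i j * W j + runningCost ε G v i + fhat i}
          (∑ j, tiltedGen G φ i j * W j + runningCost ε G φ i + fhat i)) :=
  feynman_kac_iff_bellman_general G hG1 hG2 ε hε fhat A φ hφ hφA W hW
end

section
/- Let ι be a finite nonempty type, let G : ι → ι → ℝ be a generator matrix, and let π : ι → ℝ be a probability vector (π i ≥ 0 for all i and ∑_i π i = 1) that is reversible for G, i.e. π i · G i j = π j · G j i for all i, j, and assume π is the unique probability vector reversible for G (any probability vector ρ with ρ i · G i j = ρ j · G j i for all i, j equals π). Let v : ι → ℝ with v i > 0 for all i and set Z = ∑_i v i² · π i and π^v i = Z⁻¹ · v i² · π i. Then π^v is a probability vector, it is reversible for the tilted matrix G^v (π^v i · G^v i j = π^v j · G^v j i for all i, j), it is stationary for G^v (∑_i π^v i · G^v i j = 0 for every j), and it is the unique probability vector reversible for G^v. -/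
open Finset

def IsReversible {ι : Type*} (Q : ι → ι → ℝ) (ρ : ι → ℝ) : Prop :=
  ∀ i j, ρ i * Q i j = ρ j * Q j i

section Simplex

variable {ι : Type*} [Fintype ι]

lemma inv_sum_smul_mem_stdSimplex {w : ι → ℝ} (hw : 0 ≤ w) (hsum : ∑ i, w i ≠ 0) :
    (∑ i, w i)⁻¹ • w ∈ stdSimplex ℝ ι :=
  ⟨fun i => smul_nonneg (inv_nonneg.2 (sum_nonneg fun j _ => hw j)) (hw i), by
    simp only [Pi.smul_apply, smul_eq_mul, ← mul_sum, inv_mul_cancel₀ hsum]⟩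

lemma eq_of_eq_smul_of_mem_stdSimplex {ρ μ : ι → ℝ} {c : ℝ} (hρ : ρ ∈ stdSimplex ℝ ι)
    (hμ : μ ∈ stdSimplex ℝ ι) (h : ρ = c • μ) : ρ = μ := by
  have hc : c = 1 := by
    simpa [hρ.2, hμ.2, ← mul_sum] using (congrArg (fun f : ι → ℝ => ∑ i, f i) h).symm
  rw [h, hc, one_smul]

lemma sum_mul_pos_of_mem_stdSimplex {f μ : ι → ℝ} (hf : ∀ i, 0 < f i)
    (hμ : μ ∈ stdSimplex ℝ ι) : 0 < ∑ i, f i * μ i := by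
  obtain ⟨i, -, hi⟩ := exists_ne_zero_of_sum_ne_zero (hμ.2.symm ▸ one_ne_zero : ∑ i, μ i ≠ 0)
  exact sum_pos' (fun j _ => mul_nonneg (hf j).le (hμ.1 j))
    ⟨i, mem_univ i, mul_pos (hf i) (lt_of_le_of_ne (hμ.1 i) (Ne.symm hi))⟩

end Simplex

namespace IsReversible

variable {ι : Type*} {Q : ι → ι → ℝ} {ρ : ι → ℝ}

lemma smul (h : IsReversible Q ρ) (c : ℝ) : IsReversible Q (c • ρ) := fun i j => by
  simp only [Pi.smul_apply, smul_eq_mul, mul_assoc, h i j]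

lemma sum_mul_eq_zero [Fintype ι] (h : IsReversible Q ρ) (hQ : ∀ i, ∑ j, Q i j = 0) (j : ι) :
    ∑ i, ρ i * Q i j = 0 := by
  simp only [h _ j, ← mul_sum, hQ, mul_zero]

lemma exists_eq_smul_of_unique [Fintype ι] {π : ι → ℝ}
    (huniq : ∀ σ ∈ stdSimplex ℝ ι, IsReversible Q σ → σ = π) (h : IsReversible Q ρ)
    (hρ : 0 ≤ ρ) : ∃ c : ℝ, ρ = c • π := by
  by_cases hsum : ∑ i, ρ i = 0
  · refine ⟨0, funext fun i => ?_⟩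
    simpa using (sum_eq_zero_iff_of_nonneg fun i _ => hρ i).1 hsum i (mem_univ i)
  · refine ⟨∑ i, ρ i, ?_⟩
    rw [← huniq _ (inv_sum_smul_mem_stdSimplex hρ hsum) (h.smul _), smul_inv_smul₀ hsum]

end IsReversible

section Tilted

variable {ι : Type*} [Fintype ι] [DecidableEq ι] (G : ι → ι → ℝ) (v : ι → ℝ)

lemma tiltedGen_of_ne {i j : ι} (h : j ≠ i) : tiltedGen G v i j = G i j * v j / v i :=
  if_neg h

lemma sum_tiltedGen (i : ι) : ∑ j, tiltedGen G v i j = 0 := by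
  rw [← add_sum_erase _ _ (mem_univ i),
    sum_congr rfl fun j hj => tiltedGen_of_ne G v (ne_of_mem_erase hj)]
  simp [tiltedGen]

lemma isReversible_tiltedGen_iff {ρ : ι → ℝ} (hv : ∀ i, v i ≠ 0) :
    IsReversible (tiltedGen G v) (fun i => v i ^ 2 * ρ i) ↔ IsReversible G ρ := by
  refine forall_congr' fun i => forall_congr' fun j => ?_
  rcases eq_or_ne j i with rfl | hij
  · simp
  have key : ∀ i j, j ≠ i → v i ^ 2 * ρ i * tiltedGen G v i j = v i * v j * (ρ i * G i j) :=
    fun i j hij => by rw [tiltedGen_of_ne G v hij]; field_simp [hv i]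
  rw [key i j hij, key j i hij.symm, mul_comm (v j) (v i)]
  exact mul_right_inj' (mul_ne_zero (hv i) (hv j))

end Tilted

theorem tilted_reversible_stationary_general {ι : Type*} [Fintype ι] [DecidableEq ι]
    (G : ι → ι → ℝ)
    (π : ι → ℝ) (hπ0 : ∀ i, 0 ≤ π i) (hπ1 : ∑ i, π i = 1)
    (hrev : ∀ i j, π i * G i j = π j * G j i)
    (huniq : ∀ ρ : ι → ℝ, (∀ i, 0 ≤ ρ i) → ∑ i, ρ i = 1 →
      (∀ i j, ρ i * G i j = ρ j * G j i) → ρ = π)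
    (v : ι → ℝ) (hv : ∀ i, 0 < v i)
    (Z : ℝ) (hZ : Z = ∑ i, v i ^ 2 * π i)
    (πv : ι → ℝ) (hπv : πv = fun i => Z⁻¹ * v i ^ 2 * π i) :
    ((∀ i, 0 ≤ πv i) ∧ ∑ i, πv i = 1) ∧
    (∀ i j, πv i * tiltedGen G v i j = πv j * tiltedGen G v j i) ∧
    (∀ j, ∑ i, πv i * tiltedGen G v i j = 0) ∧
    (∀ ρ : ι → ℝ, (∀ i, 0 ≤ ρ i) → ∑ i, ρ i = 1 →
      (∀ i j, ρ i * tiltedGen G v i j = ρ j * tiltedGen G v j i) → ρ = πv) := by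
  have hv0 : ∀ i, v i ≠ 0 := fun i => (hv i).ne'
  set w : ι → ℝ := fun i => v i ^ 2 * π i
  have hZ0 : Z ≠ 0 :=
    hZ ▸ (sum_mul_pos_of_mem_stdSimplex (fun i => pow_pos (hv i) 2) ⟨hπ0, hπ1⟩).ne'
  have hπvw : πv = Z⁻¹ • w := by
    simp only [hπv, w, funext_iff, Pi.smul_apply, smul_eq_mul, mul_assoc, implies_true]
  have hπv_mem : πv ∈ stdSimplex ℝ ι :=
    hπvw ▸ hZ ▸ inv_sum_smul_mem_stdSimplex (fun i => mul_nonneg (sq_nonneg _) (hπ0 i)) (hZ ▸ hZ0)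
  have hπv_rev : IsReversible (tiltedGen G v) πv :=
    hπvw ▸ ((isReversible_tiltedGen_iff G v hv0).2 hrev).smul Z⁻¹
  refine ⟨hπv_mem, hπv_rev, hπv_rev.sum_mul_eq_zero (sum_tiltedGen G v), ?_⟩
  intro ρ hρ0 hρ1 hρ_rev
  have hρ_eq : ρ = fun i => v i ^ 2 * (ρ i / v i ^ 2) := by
    funext i; field_simp [hv0 i]
  have hσ_rev : IsReversible G fun i => ρ i / v i ^ 2 :=
    (isReversible_tiltedGen_iff G v hv0).1 (hρ_eq ▸ hρ_rev)
  obtain ⟨c, hc⟩ := hσ_rev.exists_eq_smul_of_unique (fun σ hσ => huniq σ hσ.1 hσ.2)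
    fun i => div_nonneg (hρ0 i) (sq_nonneg _)
  refine eq_of_eq_smul_of_mem_stdSimplex (c := c * Z) ⟨hρ0, hρ1⟩ hπv_mem ?_
  rw [hρ_eq, hπvw, smul_smul, mul_assoc, mul_inv_cancel₀ hZ0, mul_one]
  funext i
  simp only [w, Pi.smul_apply, smul_eq_mul, congrFun hc i]
  ring

/-- If `π` is the (unique) reversible probability vector for the generator
matrix `G` and `v > 0`, then `π^v i = Z⁻¹ v i² π i` with `Z = ∑_i v i² π i` is a
probability vector, reversible and stationary for the tilted matrix `G^v`, and is the
unique reversible probability vector for `G^v`. -/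
theorem tilted_reversible_stationary {ι : Type*} [Fintype ι] [Nonempty ι] [DecidableEq ι]
    (G : ι → ι → ℝ) (hG1 : ∀ i j, i ≠ j → 0 ≤ G i j) (hG2 : ∀ i, ∑ j, G i j = 0)
    (π : ι → ℝ) (hπ0 : ∀ i, 0 ≤ π i) (hπ1 : ∑ i, π i = 1)
    (hrev : ∀ i j, π i * G i j = π j * G j i)
    (huniq : ∀ ρ : ι → ℝ, (∀ i, 0 ≤ ρ i) → ∑ i, ρ i = 1 →
      (∀ i j, ρ i * G i j = ρ j * G j i) → ρ = π)
    (v : ι → ℝ) (hv : ∀ i, 0 < v i)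
    (Z : ℝ) (hZ : Z = ∑ i, v i ^ 2 * π i)
    (πv : ι → ℝ) (hπv : πv = fun i => Z⁻¹ * v i ^ 2 * π i) :
    ((∀ i, 0 ≤ πv i) ∧ ∑ i, πv i = 1) ∧
    (∀ i j, πv i * tiltedGen G v i j = πv j * tiltedGen G v j i) ∧
    (∀ j, ∑ i, πv i * tiltedGen G v i j = 0) ∧
    (∀ ρ : ι → ℝ, (∀ i, 0 ≤ ρ i) → ∑ i, ρ i = 1 →
      (∀ i j, ρ i * tiltedGen G v i j = ρ j * tiltedGen G v j i) → ρ = πv) :=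
  tilted_reversible_stationary_general G π hπ0 hπ1 hrev huniq v hv Z hZ πv hπv
end

section
/- Let ι be a finite nonempty type, let G : ι → ι → ℝ be a generator matrix, let ε > 0, and let v : ι → ℝ with v i > 0 for all i. Then for every i ∈ ι, ε·∑_j G^v i j · log(v j) − ε·(∑_j G i j · v j)/v i = ε·∑_{j ≠ i} G i j · ((v j / v i)·(log(v j / v i) − 1) + 1) = k^v i, and moreover k^v i ≥ 0. -/
/-- For a generator matrix `G`, `ε > 0` and positive `v`, for every `i`:
`ε ∑_j G^v i j log(v j) - ε (∑_j G i j v j)/v i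
  = ε ∑_{j ≠ i} G i j ((v j / v i)(log(v j / v i) - 1) + 1) = k^v i ≥ 0`. -/
theorem running_cost_repr_nonneg {ι : Type*} [Fintype ι] [Nonempty ι] [DecidableEq ι]
    (G : ι → ι → ℝ) (hG1 : ∀ i j, i ≠ j → 0 ≤ G i j) (hG2 : ∀ i, ∑ j, G i j = 0)
    (ε : ℝ) (hε : 0 < ε) (v : ι → ℝ) (hv : ∀ i, 0 < v i) :
    ∀ i : ι,
      (ε * ∑ j, tiltedGen G v i j * Real.log (v j) - ε * (∑ j, G i j * v j) / v i =
        ε * ∑ j ∈ Finset.univ.erase i,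
          G i j * ((v j / v i) * (Real.log (v j / v i) - 1) + 1)) ∧
      (ε * ∑ j ∈ Finset.univ.erase i,
          G i j * ((v j / v i) * (Real.log (v j / v i) - 1) + 1) = runningCost ε G v i) ∧
      0 ≤ runningCost ε G v i := by
  intro i
  have hvi := hv i
  have hvi' : (v i) ≠ 0 := hvi.ne'
  have hGii : G i i = -∑ j ∈ Finset.univ.erase i, G i j := by
    have h := hG2 i
    rw [← Finset.add_sum_erase _ _ (Finset.mem_univ i)] at h
    linarith
  have h1 : ∑ j, tiltedGen G v i j * Real.log (v j)
      = ∑ j ∈ Finset.univ.erase i, (G i j * v j / v i) * (Real.log (v j) - Real.log (v i)) := by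
    rw [← Finset.add_sum_erase _ (fun j => tiltedGen G v i j * Real.log (v j)) (Finset.mem_univ i)]
    have hd : ∀ j ∈ Finset.univ.erase i, tiltedGen G v i j * Real.log (v j)
        = G i j * v j / v i * Real.log (v j) := by
      intro j hj
      rw [tiltedGen, if_neg (Finset.ne_of_mem_erase hj)]
    rw [Finset.sum_congr rfl hd]
    simp only [tiltedGen, if_pos rfl, if_true, mul_sub, Finset.sum_sub_distrib, ← Finset.sum_mul]
    simp only [div_eq_mul_inv]
    ring
  have h2 : ∑ j, G i j * v j
      = G i i * v i + ∑ j ∈ Finset.univ.erase i, G i j * v j :=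
    (Finset.add_sum_erase _ _ (Finset.mem_univ i)).symm
  have h3 : ∑ j ∈ Finset.univ.erase i, G i j * ((v j / v i) * (Real.log (v j / v i) - 1) + 1)
      = ∑ j ∈ Finset.univ.erase i,
          ((G i j * v j / v i) * (Real.log (v j) - Real.log (v i)) - G i j * v j / v i + G i j) := by
    refine Finset.sum_congr rfl fun j hj => ?_
    rw [Real.log_div (hv j).ne' hvi']
    field_simp
  refine ⟨?_, rfl, ?_⟩
  · rw [h1, h3, h2, hGii, Finset.sum_add_distrib, Finset.sum_sub_distrib, ← Finset.sum_div]
    field_simp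
    ring
  · unfold runningCost
    apply mul_nonneg hε.le
    apply Finset.sum_nonneg
    intro j hj
    apply mul_nonneg (hG1 i j (Finset.ne_of_mem_erase hj).symm)
    set x := v j / v i with hxdef
    have hx : 0 < x := div_pos (hv j) hvi
    have h := Real.log_le_sub_one_of_pos (inv_pos.mpr hx)
    rw [Real.log_inv] at h
    nlinarith [mul_inv_cancel₀ hx.ne', mul_le_mul_of_nonneg_left h hx.le]
end

section
/- Let H be a real Hilbert space, B : H → H a symmetric elliptic linear map with ellipticity constant α₂ > 0, D ⊆ H a finite-dimensional subspace, Q the orthogonal projection onto D and Q^⊥ = id − Q. Let φ ∈ H and let φ̂ ∈ D be a Galerkin solution relative to φ. Suppose C ≥ 0 satisfies ‖Q(B(Q^⊥ x))‖ ≤ C·‖x‖ for all x ∈ H. Then ‖φ − φ̂‖² ≤ (1 + C²/α₂²)·‖Q^⊥ φ‖². -/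
/-!
Write the error `e = φ - φ̂` as `Q e + Q^⊥ e`, where `Q^⊥ e = Q^⊥ φ` because `φ̂ ∈ D`.
Testing Galerkin orthogonality against `Q e` and using ellipticity gives
`α₂ ‖Q e‖² ≤ ⟪Q e, B (Q e)⟫ = -⟪Q e, Q B Q^⊥ e⟫ ≤ C ‖Q^⊥ e‖ ‖Q e‖`, so `‖Q e‖ ≤ (C / α₂) ‖Q^⊥ φ‖`,
and Pythagoras `‖e‖² = ‖Q e‖² + ‖Q^⊥ e‖²` finishes the proof.
-/

open RealInnerProductSpace

namespace Submodule

variable {H : Type*} [NormedAddCommGroup H] [InnerProductSpace ℝ H]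
  (K : Submodule ℝ H) [K.HasOrthogonalProjection]

theorem sub_starProjection_sub_of_mem (u : H) {v : H} (hv : v ∈ K) :
    u - v - K.starProjection (u - v) = u - K.starProjection u := by
  rw [map_sub, starProjection_eq_self_iff.mpr hv]
  abel

theorem mul_norm_starProjection_le_of_galerkin {B : H →ₗ[ℝ] H} {α : ℝ}
    (hell : ∀ x ∈ K, α * ‖x‖ ^ 2 ≤ ⟪x, B x⟫) {e : H} (hGal : ∀ ψ ∈ K, ⟪B e, ψ⟫ = 0) :
    α * ‖K.starProjection e‖ ≤ ‖K.starProjection (B (e - K.starProjection e))‖ := by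
  set p := K.starProjection e
  set r := e - p
  have hp : p ∈ K := K.starProjection_apply_mem e
  have hBe : B e = B p + B r := by rw [← map_add, add_sub_cancel]
  have key : α * ‖p‖ * ‖p‖ ≤ ‖K.starProjection (B r)‖ * ‖p‖ :=
    calc α * ‖p‖ * ‖p‖ = α * ‖p‖ ^ 2 := by ring
      _ ≤ ⟪p, B p⟫ := hell p hp
      _ = -⟪p, B r⟫ := by
        have h : ⟪p, B p⟫ + ⟪p, B r⟫ = 0 := by
          rw [← inner_add_right, ← hBe, real_inner_comm]
          exact hGal p hp
        linarith
      _ = -⟪p, K.starProjection (B r)⟫ := by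
        rw [← inner_starProjection_left_eq_right, starProjection_eq_self_iff.mpr hp]
      _ ≤ ‖p‖ * ‖K.starProjection (B r)‖ := (neg_le_abs _).trans (abs_real_inner_le_norm _ _)
      _ = ‖K.starProjection (B r)‖ * ‖p‖ := mul_comm _ _
  rcases (norm_nonneg p).eq_or_lt with hp0 | hp0
  · rw [← hp0, mul_zero]
    exact norm_nonneg _
  · exact le_of_mul_le_mul_right key hp0

end Submodule

open Submodule

theorem galerkin_L2_error_bound_general {H : Type*} [NormedAddCommGroup H]
    [InnerProductSpace ℝ H]
    (B : H →ₗ[ℝ] H)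
    (α₂ : ℝ) (hα₂ : 0 < α₂) (hell : ∀ x : H, α₂ * ‖x‖ ^ 2 ≤ ⟪x, B x⟫)
    (D : Submodule ℝ H) [FiniteDimensional ℝ D]
    (φ φhat : H) (hmem : φhat ∈ D)
    (hGal : ∀ ψ ∈ D, ⟪B (φ - φhat), ψ⟫ = 0)
    (C : ℝ)
    (hCbound : ∀ x : H,
      ‖(D.orthogonalProjectionOnto (B (x - D.orthogonalProjectionOnto x)) : H)‖ ≤ C * ‖x‖) :
    ‖φ - φhat‖ ^ 2 ≤ (1 + C ^ 2 / α₂ ^ 2) * ‖φ - (D.orthogonalProjectionOnto φ : H)‖ ^ 2 := by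
  simp only [← starProjection_apply] at hCbound ⊢
  set e := φ - φhat
  have herr : e - D.starProjection e = φ - D.starProjection φ :=
    D.sub_starProjection_sub_of_mem φ hmem
  have hbound : α₂ * ‖D.starProjection e‖ ≤ C * ‖φ - D.starProjection φ‖ :=
    calc α₂ * ‖D.starProjection e‖
        ≤ ‖D.starProjection (B (φ - D.starProjection φ))‖ :=
          herr ▸ D.mul_norm_starProjection_le_of_galerkin (fun x _ ↦ hell x) hGal
      _ ≤ C * ‖φ - D.starProjection φ‖ := by
        have h := hCbound (φ - D.starProjection φ)
        rwa [D.sub_starProjection_sub_of_mem φ (D.starProjection_apply_mem φ)] at h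
  have hproj : ‖D.starProjection e‖ ^ 2 ≤ C ^ 2 / α₂ ^ 2 * ‖φ - D.starProjection φ‖ ^ 2 := by
    have h := pow_le_pow_left₀ (norm_nonneg _) ((le_div_iff₀' hα₂).mpr hbound) 2
    rwa [mul_div_right_comm, mul_pow, div_pow] at h
  calc ‖e‖ ^ 2 = ‖D.starProjection e‖ ^ 2 + ‖φ - D.starProjection φ‖ ^ 2 := by
        rw [D.norm_sq_eq_add_norm_sq_starProjection e, starProjection_orthogonal_val, herr]
    _ ≤ (1 + C ^ 2 / α₂ ^ 2) * ‖φ - D.starProjection φ‖ ^ 2 := by linarith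

/-- Let `B` be a symmetric elliptic linear map on a real Hilbert space `H`
with ellipticity constant `α₂ > 0`, `D` a finite-dimensional subspace, `Q` the
orthogonal projection onto `D`. If `φ̂ ∈ D` is a Galerkin solution relative to `φ` and
`‖Q B Q^⊥ x‖ ≤ C ‖x‖` for all `x`, then `‖φ - φ̂‖² ≤ (1 + C²/α₂²) ‖Q^⊥ φ‖²`. -/
theorem galerkin_L2_error_bound {H : Type*} [NormedAddCommGroup H]
    [InnerProductSpace ℝ H] [CompleteSpace H]
    (B : H →ₗ[ℝ] H) (hsym : ∀ x y : H, ⟪B x, y⟫ = ⟪x, B y⟫)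
    (α₂ : ℝ) (hα₂ : 0 < α₂) (hell : ∀ x : H, α₂ * ‖x‖ ^ 2 ≤ ⟪x, B x⟫)
    (D : Submodule ℝ H) [FiniteDimensional ℝ D]
    (φ φhat : H) (hmem : φhat ∈ D)
    (hGal : ∀ ψ ∈ D, ⟪B (φ - φhat), ψ⟫ = 0)
    (C : ℝ) (hC : 0 ≤ C)
    (hCbound : ∀ x : H,
      ‖(D.orthogonalProjectionOnto (B (x - D.orthogonalProjectionOnto x)) : H)‖ ≤ C * ‖x‖) :
    ‖φ - φhat‖ ^ 2 ≤ (1 + C ^ 2 / α₂ ^ 2) * ‖φ - (D.orthogonalProjectionOnto φ : H)‖ ^ 2 :=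
  galerkin_L2_error_bound_general B α₂ hα₂ hell D φ φhat hmem hGal C hCbound
end

section
/- Let H be a real Hilbert space, let χ₁, …, χ_n ∈ H, let D be the subspace they span, let Q be the orthogonal projection onto D, and let T : H → H be a linear map. Let M be the Gram matrix M i j = ⟨χ_i, χ_j⟩ and suppose m > 0 satisfies c ⬝ (M c) ≥ m·‖c‖² for all c ∈ ℝ^n. Set δ = max over k of ‖(id − Q)(T χ_k)‖. Then for every φ ∈ D, ‖(id − Q)(T φ)‖ ≤ δ·√(n/m)·‖φ‖. -/
open RealInnerProductSpace

/-! Write `φ = ∑ cᵢ χᵢ`. The error map `(id - Q) ∘ T` is linear (`id - Q` is the projection onto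
`Dᗮ`), so `‖(id - Q)(T φ)‖ ≤ δ ∑ |cᵢ|`.
Cauchy–Schwarz gives `∑ |cᵢ| ≤ √n ‖c‖`, and the coercivity of the Gram matrix gives
`m ‖c‖² ≤ cᵀ M c = ‖φ‖²`. -/

theorem norm_sum_smul_le_mul_sum_abs {ι F : Type*} [Fintype ι] [SeminormedAddCommGroup F]
    [NormedSpace ℝ F] (v : ι → F) (c : ι → ℝ) {δ : ℝ} (hv : ∀ i, ‖v i‖ ≤ δ) :
    ‖∑ i, c i • v i‖ ≤ δ * ∑ i, |c i| :=
  calc ‖∑ i, c i • v i‖ ≤ ∑ i, ‖c i • v i‖ := norm_sum_le _ _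
    _ ≤ ∑ i, |c i| * δ := Finset.sum_le_sum fun i _ => by
        rw [norm_smul, Real.norm_eq_abs]
        exact mul_le_mul_of_nonneg_left (hv i) (abs_nonneg _)
    _ = δ * ∑ i, |c i| := by rw [← Finset.sum_mul, mul_comm]

theorem norm_sum_smul_sq_eq_sum_inner {ι E : Type*} [Fintype ι] [SeminormedAddCommGroup E]
    [InnerProductSpace ℝ E] (χ : ι → E) (c : ι → ℝ) :
    ‖∑ i, c i • χ i‖ ^ 2 = ∑ i, c i * ∑ j, ⟪χ i, χ j⟫ * c j := by
  rw [← real_inner_self_eq_norm_sq]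
  simp only [sum_inner, inner_sum, real_inner_smul_left, real_inner_smul_right, Finset.mul_sum]
  exact Finset.sum_congr rfl fun i _ => Finset.sum_congr rfl fun j _ => by
    rw [real_inner_comm]; ring

theorem sum_abs_le_sqrt_card_div_mul {ι : Type*} [Fintype ι] (c : ι → ℝ) {m x : ℝ}
    (hm : 0 < m) (hx : 0 ≤ x) (hc : m * ∑ i, c i ^ 2 ≤ x ^ 2) :
    ∑ i, |c i| ≤ Real.sqrt (Fintype.card ι / m) * x := by
  have hcs : (∑ i, |c i|) ^ 2 ≤ Fintype.card ι * ∑ i, c i ^ 2 := by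
    simpa only [sq_abs, Finset.card_univ] using
      sq_sum_le_card_mul_sum_sq (s := Finset.univ) (f := fun i => |c i|)
  have hsq : (∑ i, |c i|) ^ 2 ≤ (Real.sqrt (Fintype.card ι / m) * x) ^ 2 := by
    rw [mul_pow, Real.sq_sqrt (by positivity), div_mul_eq_mul_div, le_div_iff₀ hm]
    calc (∑ i, |c i|) ^ 2 * m ≤ Fintype.card ι * ∑ i, c i ^ 2 * m := by
          rw [← Finset.sum_mul, ← mul_assoc]
          exact mul_le_mul_of_nonneg_right hcs hm.le
      _ ≤ Fintype.card ι * x ^ 2 := by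
          rw [← Finset.sum_mul, mul_comm _ m]
          exact mul_le_mul_of_nonneg_left hc (Nat.cast_nonneg _)
  exact pow_le_pow_iff_left₀ (Finset.sum_nonneg fun i _ => abs_nonneg _)
    (by positivity) two_ne_zero |>.mp hsq

theorem projection_error_on_span_general {H : Type*} [NormedAddCommGroup H]
    [InnerProductSpace ℝ H]
    {n : ℕ} (χ : Fin n → H)
    (D : Submodule ℝ H) (hD : D = Submodule.span ℝ (Set.range χ))
    [FiniteDimensional ℝ D]
    (T : H →ₗ[ℝ] H)
    (M : Matrix (Fin n) (Fin n) ℝ) (hM : ∀ i j, M i j = ⟪χ i, χ j⟫)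
    (m : ℝ) (hm : 0 < m)
    (hMbound : ∀ c : Fin n → ℝ, m * ∑ i, c i ^ 2 ≤ ∑ i, c i * ∑ j, M i j * c j)
    (δ : ℝ)
    (hδ : IsGreatest
      (Set.range fun k : Fin n =>
        ‖T (χ k) - (D.orthogonalProjectionOnto (T (χ k)) : H)‖) δ) :
    ∀ φ ∈ D,
      ‖T φ - (D.orthogonalProjectionOnto (T φ) : H)‖ ≤ δ * Real.sqrt (n / m) * ‖φ‖ := by
  intro φ hφ
  obtain ⟨c, rfl⟩ := (Submodule.mem_span_range_iff_exists_fun ℝ).mp (hD ▸ hφ)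
  obtain ⟨⟨k, hk⟩, hmax⟩ := hδ
  have hδ_nonneg : 0 ≤ δ := hk ▸ norm_nonneg _
  have herror (x : H) : x - (D.orthogonalProjectionOnto x : H) = Dᗮ.starProjection x :=
    (Submodule.starProjection_orthogonal_val x).symm
  have hcoeff : ∑ i, |c i| ≤ Real.sqrt (n / m) * ‖∑ i, c i • χ i‖ := by
    have hgram : m * ∑ i, c i ^ 2 ≤ ‖∑ i, c i • χ i‖ ^ 2 := by
      simpa only [norm_sum_smul_sq_eq_sum_inner, hM] using hMbound c
    simpa only [Fintype.card_fin] using sum_abs_le_sqrt_card_div_mul c hm (norm_nonneg _) hgram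
  calc ‖T (∑ i, c i • χ i) - (D.orthogonalProjectionOnto (T (∑ i, c i • χ i)) : H)‖
      = ‖∑ i, c i • (T (χ i) - (D.orthogonalProjectionOnto (T (χ i)) : H))‖ := by
        rw [herror]
        simp only [herror, map_sum, map_smul]
    _ ≤ δ * ∑ i, |c i| := norm_sum_smul_le_mul_sum_abs _ c fun i => hmax ⟨i, rfl⟩
    _ ≤ δ * (Real.sqrt (n / m) * ‖∑ i, c i • χ i‖) := mul_le_mul_of_nonneg_left hcoeff hδ_nonneg
    _ = δ * Real.sqrt (n / m) * ‖∑ i, c i • χ i‖ := (mul_assoc _ _ _).symm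

/-- Let `χ₁, …, χ_n ∈ H` span `D`, let `Q` be the orthogonal projection
onto `D`, `T : H → H` linear, `M` the Gram matrix with `c ⬝ M c ≥ m ‖c‖²` for `m > 0`,
and `δ = max_k ‖(id - Q)(T χ_k)‖`. Then `‖(id - Q)(T φ)‖ ≤ δ √(n/m) ‖φ‖` for `φ ∈ D`. -/
theorem projection_error_on_span {H : Type*} [NormedAddCommGroup H]
    [InnerProductSpace ℝ H] [CompleteSpace H]
    {n : ℕ} (χ : Fin n → H)
    (D : Submodule ℝ H) (hD : D = Submodule.span ℝ (Set.range χ))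
    [FiniteDimensional ℝ D]
    (T : H →ₗ[ℝ] H)
    (M : Matrix (Fin n) (Fin n) ℝ) (hM : ∀ i j, M i j = ⟪χ i, χ j⟫)
    (m : ℝ) (hm : 0 < m)
    (hMbound : ∀ c : Fin n → ℝ, m * ∑ i, c i ^ 2 ≤ ∑ i, c i * ∑ j, M i j * c j)
    (δ : ℝ)
    (hδ : IsGreatest
      (Set.range fun k : Fin n =>
        ‖T (χ k) - (D.orthogonalProjectionOnto (T (χ k)) : H)‖) δ) :
    ∀ φ ∈ D,
      ‖T φ - (D.orthogonalProjectionOnto (T φ) : H)‖ ≤ δ * Real.sqrt (n / m) * ‖φ‖ :=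
  projection_error_on_span_general χ D hD T M hM m hm hMbound δ hδ
end

section
/- Let H be a real Hilbert space, B : H → H a symmetric elliptic linear map with ellipticity constant α₂ > 0, and suppose B = B₁ + B₂ for linear maps B₁, B₂ : H → H. Let χ₁, …, χ_n ∈ H span the finite-dimensional subspace D, let Q be the orthogonal projection onto D and Q^⊥ = id − Q, let M be the Gram matrix M i j = ⟨χ_i, χ_j⟩, and let m > 0 satisfy c ⬝ (M c) ≥ m·‖c‖² for all c ∈ ℝ^n. Set δ₁ = max_k ‖Q^⊥(B₁ χ_k)‖ and δ₂ = max_k ‖Q^⊥(B₂ χ_k)‖. If φ ∈ H and φ̂ ∈ D is a Galerkin solution relative to φ, then ‖φ − φ̂‖² ≤ (1 + (n/m)·(δ₁ + δ₂)²/α₂²)·‖Q^⊥ φ‖². -/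
/-!
Split the error as `φ - φ̂ = w + d` with `w = Q^⊥ φ ∈ Dᗮ` and `d = Q φ - φ̂ ∈ D`, so that
`‖φ - φ̂‖² = ‖w‖² + ‖d‖²`. Galerkin orthogonality tested against `d`, symmetry of `B` and
`w ⊥ D` give `α₂ ‖d‖² ≤ ⟪d, B d⟫ = -⟪w, Q^⊥ B d⟫ ≤ ‖w‖ ‖Q^⊥ B d‖`. Writing `d = ∑ cᵢ χᵢ`,
`‖Q^⊥ B d‖ ≤ (δ₁ + δ₂) ∑ |cᵢ|`, while Cauchy–Schwarz and the lower Gram bound give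
`(∑ |cᵢ|)² ≤ n ∑ cᵢ² ≤ (n / m) ‖d‖²`. Dividing out one factor `‖d‖²` yields
`‖d‖² ≤ (n / m) (δ₁ + δ₂)² / α₂² ‖w‖²`.
-/

open RealInnerProductSpace Submodule

lemma sq_le_div_sq_mul_sq_of_mul_sq_le {α a t s K : ℝ} (hα : 0 < α) (hK : 0 ≤ K)
    (h : α * a ^ 2 ≤ t * s) (hs : s ^ 2 ≤ K * a ^ 2) :
    a ^ 2 ≤ K / α ^ 2 * t ^ 2 := by
  rw [div_mul_eq_mul_div, le_div_iff₀ (by positivity)]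
  rcases (sq_nonneg a).eq_or_lt with ha | ha
  · rw [← ha, zero_mul]; positivity
  have hsq : (α * a ^ 2) ^ 2 ≤ (t * s) ^ 2 := pow_le_pow_left₀ (by positivity) h 2
  refine le_of_mul_le_mul_right ?_ ha
  nlinarith [mul_le_mul_of_nonneg_left hs (sq_nonneg t)]

section SpanCoefficients

variable {E : Type*} [NormedAddCommGroup E] [InnerProductSpace ℝ E] {ι : Type*} [Fintype ι]

lemma norm_sum_smul_sq_eq_sum_mul_inner (v : ι → E) (c : ι → ℝ) :
    ‖∑ i, c i • v i‖ ^ 2 = ∑ i, c i * ∑ j, ⟪v i, v j⟫ * c j := by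
  rw [← real_inner_self_eq_norm_sq, ← Matrix.star_dotProduct_gram_mulVec]
  rfl

lemma sq_sum_abs_le_div_mul_norm_sum_smul_sq (v : ι → E) (c : ι → ℝ) {m : ℝ} (hm : 0 < m)
    (hgram : m * ∑ i, c i ^ 2 ≤ ‖∑ i, c i • v i‖ ^ 2) :
    (∑ i, |c i|) ^ 2 ≤ Fintype.card ι / m * ‖∑ i, c i • v i‖ ^ 2 := by
  have hcs : (∑ i, |c i|) ^ 2 ≤ Fintype.card ι * ∑ i, c i ^ 2 := by
    simpa only [sq_abs, Finset.card_univ] using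
      sq_sum_le_card_mul_sum_sq (s := Finset.univ) (f := fun i => |c i|)
  rw [div_mul_eq_mul_div, le_div_iff₀ hm]
  nlinarith [Nat.cast_nonneg (α := ℝ) (Fintype.card ι)]

lemma norm_map_sum_smul_le {F : Type*} [SeminormedAddCommGroup F] [NormedSpace ℝ F]
    (T : E →ₗ[ℝ] F) (v : ι → E) (c : ι → ℝ) {δ : ℝ} (hδ : ∀ i, ‖T (v i)‖ ≤ δ) :
    ‖T (∑ i, c i • v i)‖ ≤ δ * ∑ i, |c i| := by
  rw [map_sum, Finset.mul_sum]
  refine (norm_sum_le _ _).trans (Finset.sum_le_sum fun i _ => ?_)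
  rw [map_smul, norm_smul, Real.norm_eq_abs, mul_comm δ]
  exact mul_le_mul_of_nonneg_left (hδ i) (abs_nonneg _)

end SpanCoefficients

section Galerkin

variable {H : Type*} [NormedAddCommGroup H] [InnerProductSpace ℝ H]
  (K : Submodule ℝ H) [K.HasOrthogonalProjection]

lemma norm_sub_sq_eq_add_of_mem {x y : H} (hy : y ∈ K) :
    ‖x - y‖ ^ 2 = ‖x - K.starProjection x‖ ^ 2 + ‖K.starProjection x - y‖ ^ 2 := by
  have horth : ⟪x - K.starProjection x, K.starProjection x - y⟫ = 0 :=
    K.starProjection_inner_eq_zero x _ (K.sub_mem (K.starProjection_apply_mem x) hy)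
  rw [← sub_add_sub_cancel x (K.starProjection x) y, norm_add_sq_real, horth]
  ring

lemma mul_norm_sq_le_of_galerkin {B : H →ₗ[ℝ] H} (hsym : B.IsSymmetric) {α : ℝ}
    (hell : ∀ x, α * ‖x‖ ^ 2 ≤ ⟪x, B x⟫) {φ φhat : H} (hmem : φhat ∈ K)
    (hGal : ∀ ψ ∈ K, ⟪B (φ - φhat), ψ⟫ = 0) :
    α * ‖K.starProjection φ - φhat‖ ^ 2 ≤
      ‖φ - K.starProjection φ‖ * ‖Kᗮ.starProjection (B (K.starProjection φ - φhat))‖ := by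
  set w := φ - K.starProjection φ
  set d := K.starProjection φ - φhat
  have hd : d ∈ K := K.sub_mem (K.starProjection_apply_mem φ) hmem
  have hw : Kᗮ.starProjection w = w := by
    rw [starProjection_eq_self_iff]
    exact K.sub_starProjection_mem_orthogonal φ
  have hgal : ⟪d, B d⟫ = -⟪w, Kᗮ.starProjection (B d)⟫ := by
    have h : ⟪B w, d⟫ + ⟪B d, d⟫ = 0 := by
      have h := hGal d hd
      rwa [← sub_add_sub_cancel φ (K.starProjection φ) φhat, map_add, inner_add_left] at h
    rw [← inner_starProjection_left_eq_right, hw, ← hsym w d]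
    linarith [real_inner_comm d (B d)]
  calc α * ‖d‖ ^ 2 ≤ ⟪d, B d⟫ := hell d
    _ = -⟪w, Kᗮ.starProjection (B d)⟫ := hgal
    _ ≤ ‖w‖ * ‖Kᗮ.starProjection (B d)‖ := (neg_le_abs _).trans (abs_real_inner_le_norm _ _)

end Galerkin

theorem galerkin_error_bound_span_general {H : Type*} [NormedAddCommGroup H]
    [InnerProductSpace ℝ H]
    (B B₁ B₂ : H →ₗ[ℝ] H) (hB : B = B₁ + B₂)
    (hsym : ∀ x y : H, ⟪B x, y⟫ = ⟪x, B y⟫)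
    (α₂ : ℝ) (hα₂ : 0 < α₂) (hell : ∀ x : H, α₂ * ‖x‖ ^ 2 ≤ ⟪x, B x⟫)
    {n : ℕ} (χ : Fin n → H)
    (D : Submodule ℝ H) (hD : D = Submodule.span ℝ (Set.range χ))
    [FiniteDimensional ℝ D]
    (M : Matrix (Fin n) (Fin n) ℝ) (hM : ∀ i j, M i j = ⟪χ i, χ j⟫)
    (m : ℝ) (hm : 0 < m)
    (hMbound : ∀ c : Fin n → ℝ, m * ∑ i, c i ^ 2 ≤ ∑ i, c i * ∑ j, M i j * c j)
    (δ₁ δ₂ : ℝ)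
    (hδ₁ : IsGreatest
      (Set.range fun k : Fin n =>
        ‖B₁ (χ k) - (D.orthogonalProjectionOnto (B₁ (χ k)) : H)‖) δ₁)
    (hδ₂ : IsGreatest
      (Set.range fun k : Fin n =>
        ‖B₂ (χ k) - (D.orthogonalProjectionOnto (B₂ (χ k)) : H)‖) δ₂)
    (φ φhat : H) (hmem : φhat ∈ D)
    (hGal : ∀ ψ ∈ D, ⟪B (φ - φhat), ψ⟫ = 0) :
    ‖φ - φhat‖ ^ 2 ≤ (1 + (n / m) * (δ₁ + δ₂) ^ 2 / α₂ ^ 2) *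
      ‖φ - (D.orthogonalProjectionOnto φ : H)‖ ^ 2 := by
  simp only [coe_orthogonalProjectionOnto_apply] at hδ₁ hδ₂ ⊢
  simp only [← starProjection_orthogonal_val] at hδ₁ hδ₂
  obtain ⟨c, hc⟩ := (mem_span_range_iff_exists_fun ℝ).mp
    (hD.le <| D.sub_mem (D.starProjection_apply_mem φ) hmem)
  have hresidual : ∀ k, ‖((Dᗮ.starProjection : H →ₗ[ℝ] H) ∘ₗ B) (χ k)‖ ≤ δ₁ + δ₂ := fun k => by
    rw [LinearMap.comp_apply, hB, LinearMap.add_apply, map_add]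
    exact (norm_add_le _ _).trans (add_le_add (hδ₁.2 ⟨k, rfl⟩) (hδ₂.2 ⟨k, rfl⟩))
  have hgram : m * ∑ i, c i ^ 2 ≤ ‖∑ i, c i • χ i‖ ^ 2 := by
    simpa only [norm_sum_smul_sq_eq_sum_mul_inner, hM] using hMbound c
  have hgalerkin := mul_norm_sq_le_of_galerkin D hsym hell hmem hGal
  rw [← hc] at hgalerkin
  have hcoeff := sq_sum_abs_le_div_mul_norm_sum_smul_sq χ c hm hgram
  rw [Fintype.card_fin] at hcoeff
  have hdiscrete : ‖∑ i, c i • χ i‖ ^ 2 ≤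
      n / m * (δ₁ + δ₂) ^ 2 / α₂ ^ 2 * ‖φ - D.starProjection φ‖ ^ 2 := by
    refine sq_le_div_sq_mul_sq_of_mul_sq_le hα₂ (by positivity) (hgalerkin.trans <|
      mul_le_mul_of_nonneg_left (norm_map_sum_smul_le _ χ c hresidual) (norm_nonneg _)) ?_
    rw [mul_pow, mul_comm _ ((δ₁ + δ₂) ^ 2), mul_assoc]
    exact mul_le_mul_of_nonneg_left hcoeff (sq_nonneg _)
  rw [norm_sub_sq_eq_add_of_mem D hmem, ← hc]
  linarith

/-- Let `B = B₁ + B₂` be a symmetric elliptic linear map on a real Hilbert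
space `H` with ellipticity constant `α₂ > 0`, let `χ₁, …, χ_n` span the
finite-dimensional subspace `D` with Gram matrix `M` satisfying `c ⬝ M c ≥ m ‖c‖²` for
`m > 0`, and set `δᵢ = max_k ‖Q^⊥(Bᵢ χ_k)‖`. If `φ̂ ∈ D` is a Galerkin solution relative
to `φ`, then `‖φ - φ̂‖² ≤ (1 + (n/m)(δ₁ + δ₂)²/α₂²) ‖Q^⊥ φ‖²`. -/
theorem galerkin_error_bound_span {H : Type*} [NormedAddCommGroup H]
    [InnerProductSpace ℝ H] [CompleteSpace H]
    (B B₁ B₂ : H →ₗ[ℝ] H) (hB : B = B₁ + B₂)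
    (hsym : ∀ x y : H, ⟪B x, y⟫ = ⟪x, B y⟫)
    (α₂ : ℝ) (hα₂ : 0 < α₂) (hell : ∀ x : H, α₂ * ‖x‖ ^ 2 ≤ ⟪x, B x⟫)
    {n : ℕ} (χ : Fin n → H)
    (D : Submodule ℝ H) (hD : D = Submodule.span ℝ (Set.range χ))
    [FiniteDimensional ℝ D]
    (M : Matrix (Fin n) (Fin n) ℝ) (hM : ∀ i j, M i j = ⟪χ i, χ j⟫)
    (m : ℝ) (hm : 0 < m)
    (hMbound : ∀ c : Fin n → ℝ, m * ∑ i, c i ^ 2 ≤ ∑ i, c i * ∑ j, M i j * c j)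
    (δ₁ δ₂ : ℝ)
    (hδ₁ : IsGreatest
      (Set.range fun k : Fin n =>
        ‖B₁ (χ k) - (D.orthogonalProjectionOnto (B₁ (χ k)) : H)‖) δ₁)
    (hδ₂ : IsGreatest
      (Set.range fun k : Fin n =>
        ‖B₂ (χ k) - (D.orthogonalProjectionOnto (B₂ (χ k)) : H)‖) δ₂)
    (φ φhat : H) (hmem : φhat ∈ D)
    (hGal : ∀ ψ ∈ D, ⟪B (φ - φhat), ψ⟫ = 0) :
    ‖φ - φhat‖ ^ 2 ≤ (1 + (n / m) * (δ₁ + δ₂) ^ 2 / α₂ ^ 2) *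
      ‖φ - (D.orthogonalProjectionOnto φ : H)‖ ^ 2 :=
  galerkin_error_bound_span_general B B₁ B₂ hB hsym α₂ hα₂ hell χ D hD M hM m hm hMbound δ₁ δ₂ hδ₁
    hδ₂ φ φhat hmem hGal
end
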